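/- Let n ≥ 1 and let B be an n-dimensional Brownian motion started at 0, and let G = {(t, B(t)) : t ∈ [0,∞)} ⊆ ℝ^{1+n} be the graph of B. Then almost surely the following holds: every nondegenerate arc contained in G is not a quasiarc. That is, almost surely, for every subset A of G that is the image of the interval [0,1] under a homeomorphism and contains more than one point, there is no quasisymmetric homeomorphism from [0,1] onto A (with A carrying the Euclidean metric of ℝ^{1+n}). -/

import Mathlib

/-!
Write `Γ t = (t, B t)`. Almost surely, for every `C` and every rational time interval there are
times `s ≤ u ≤ t` in it with `|Γ s - Γ u| > C |Γ s - Γ t|`. Indeed, cut the interval into `N`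
blocks of two steps of length `δ`. In each block, independently and with a probability `p > 0`
which by Brownian scaling does not depend on `δ`, the path moves by about `√δ` along a fixed unit
vector and then comes back to within a small multiple of `√δ` of its starting point, while time
advances only by `2δ ≪ √δ`. All `N` blocks fail with probability `(1 - p) ^ N → 0`.

On the other hand, an arc `A` of the graph is traversed monotonically in time. So if
`f : [0,1] → A` is an `η`-quasisymmetry and `s ≤ u ≤ t` lie in the time projection of `A`, the
preimages `x, y, z` of `Γ s, Γ u, Γ t` satisfy `|x - y| ≤ |x - z|`, hence
`|Γ s - Γ u| ≤ η 1 · |Γ s - Γ t|`, which is impossible on a rational subinterval.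
-/

open MeasureTheory ProbabilityTheory

noncomputable section

/-- A distortion function `η : [0,∞) → [0,∞)` for quasisymmetric maps: increasing,
continuous, `η 0 = 0` and `η t → ∞` as `t → ∞`. -/
structure IsDistortion (η : ℝ → ℝ) : Prop where
  continuousOn : ContinuousOn η (Set.Ici 0)
  monotoneOn : MonotoneOn η (Set.Ici 0)
  nonneg : ∀ t : ℝ, 0 ≤ t → 0 ≤ η t
  map_zero : η 0 = 0
  tendsto_atTop : Filter.Tendsto η Filter.atTop Filter.atTop

/-- `f : X ≃ₜ Y` is a quasisymmetric homeomorphism between metric spaces. -/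
def IsQuasisymmetry {X Y : Type*} [MetricSpace X] [MetricSpace Y] (f : X ≃ₜ Y) : Prop :=
  ∃ η : ℝ → ℝ, IsDistortion η ∧
    ∀ x y z : X, x ≠ z →
      dist (f x) (f y) / dist (f x) (f z) ≤ η (dist x y / dist x z)

/-- `B` is an `n`-dimensional Brownian motion started at `0` on the probability
space `Ω`: it starts at `0` a.s., has a.s. continuous sample paths on `[0,∞)`,
has independent increments, and for `0 ≤ s ≤ t` the coordinates of the increment
`B t - B s` are independent centered real Gaussians of variance `t - s`. -/
structure IsBrownianMotion {Ω : Type*} [MeasureSpace Ω] (n : ℕ)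
    (B : ℝ → Ω → EuclideanSpace ℝ (Fin n)) : Prop where
  isProbability : IsProbabilityMeasure (ℙ : Measure Ω)
  measurable : ∀ t : ℝ, Measurable (B t)
  start : ∀ᵐ ω ∂ℙ, B 0 ω = 0
  cont_paths : ∀ᵐ ω ∂ℙ, ContinuousOn (fun t => B t ω) (Set.Ici 0)
  indep_incr : ∀ (k : ℕ) (t : Fin (k + 1) → ℝ), (∀ i, 0 ≤ t i) → Monotone t →
    iIndepFun
      (fun (i : Fin k) (ω : Ω) => B (t i.succ) ω - B (t i.castSucc) ω) ℙ
  coord_indep : ∀ s t : ℝ, 0 ≤ s → s ≤ t →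
    iIndepFun
      (fun (i : Fin n) (ω : Ω) => B t ω i - B s ω i) ℙ
  coord_gaussian : ∀ s t : ℝ, 0 ≤ s → s ≤ t → ∀ i : Fin n,
    Measure.map (fun ω => B t ω i - B s ω i) ℙ = gaussianReal 0 (t - s).toNNReal

/-- The point `(t, v) ∈ ℝ^{1+n}` of the graph of a function into `ℝⁿ`. -/
def graphPoint {n : ℕ} (t : ℝ) (v : EuclideanSpace ℝ (Fin n)) :
    EuclideanSpace ℝ (Fin (1 + n)) :=
  (WithLp.equiv 2 (Fin (1 + n) → ℝ)).symm (Fin.append ![t] (fun j => v j))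

open Metric Set

section GraphGeometry

variable {n : ℕ}

lemma graphPoint_apply_castAdd_zero (t : ℝ) (v : EuclideanSpace ℝ (Fin n)) :
    graphPoint t v (Fin.castAdd n 0) = t := by
  simp [graphPoint]

lemma graphPoint_apply_natAdd (t : ℝ) (v : EuclideanSpace ℝ (Fin n)) (i : Fin n) :
    graphPoint t v (Fin.natAdd 1 i) = v i := by
  simp [graphPoint]

lemma dist_graphPoint_sq (s t : ℝ) (v w : EuclideanSpace ℝ (Fin n)) :
    dist (graphPoint s v) (graphPoint t w) ^ 2 = (s - t) ^ 2 + dist v w ^ 2 := by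
  rw [EuclideanSpace.dist_eq, EuclideanSpace.dist_eq, Real.sq_sqrt (by positivity),
    Real.sq_sqrt (by positivity), Fin.sum_univ_add]
  simp [graphPoint_apply_castAdd_zero, graphPoint_apply_natAdd, Real.dist_eq, sq_abs]

lemma dist_le_dist_graphPoint (s t : ℝ) (v w : EuclideanSpace ℝ (Fin n)) :
    dist v w ≤ dist (graphPoint s v) (graphPoint t w) := by
  refine le_of_sq_le_sq ?_ dist_nonneg
  rw [dist_graphPoint_sq]
  nlinarith [sq_nonneg (s - t)]

lemma dist_graphPoint_le (s t : ℝ) (v w : EuclideanSpace ℝ (Fin n)) :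
    dist (graphPoint s v) (graphPoint t w) ≤ |s - t| + dist v w := by
  refine le_of_sq_le_sq ?_ (by positivity)
  rw [dist_graphPoint_sq, add_sq, sq_abs]
  nlinarith [abs_nonneg (s - t), dist_nonneg (x := v) (y := w)]

lemma mul_dist_graphPoint_lt {C r δ : ℝ} (hC : 0 ≤ C) (hδ : 0 < δ)
    (hCr : C * (2 * √δ + 2 * r) < 1 - r) {c : EuclideanSpace ℝ (Fin n)} (hc : ‖c‖ = 1)
    (s : ℝ) {v₀ v₁ v₂ : EuclideanSpace ℝ (Fin n)} (h₁ : (√δ)⁻¹ • (v₁ - v₀) ∈ closedBall c r)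
    (h₂ : (√δ)⁻¹ • (v₂ - v₁) ∈ closedBall (-c) r) :
    C * dist (graphPoint s v₀) (graphPoint (s + δ + δ) v₂)
      < dist (graphPoint s v₀) (graphPoint (s + δ) v₁) := by
  set σ := √δ
  have hσ : 0 < σ := Real.sqrt_pos.2 hδ
  rw [mem_closedBall, dist_eq_norm] at h₁ h₂
  have hlow : σ * (1 - r) ≤ dist v₀ v₁ := by
    have h : 1 - r ≤ σ⁻¹ * ‖v₁ - v₀‖ := by
      rw [← abs_of_pos (inv_pos.2 hσ), ← Real.norm_eq_abs, ← norm_smul, ← hc]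
      linarith [norm_sub_norm_le c (σ⁻¹ • (v₁ - v₀)), norm_sub_rev c (σ⁻¹ • (v₁ - v₀))]
    rw [dist_comm, dist_eq_norm]
    exact (le_inv_mul_iff₀ hσ).1 h
  have hup : dist v₀ v₂ ≤ σ * (2 * r) := by
    have h : v₂ - v₀ = σ • ((σ⁻¹ • (v₁ - v₀) - c) + (σ⁻¹ • (v₂ - v₁) - -c)) := by
      simp only [smul_add, smul_sub, smul_neg, smul_smul, mul_inv_cancel₀ hσ.ne', one_smul]
      abel
    rw [dist_comm, dist_eq_norm, h, norm_smul, Real.norm_eq_abs, abs_of_pos hσ]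
    gcongr
    linarith [norm_add_le (σ⁻¹ • (v₁ - v₀) - c) (σ⁻¹ • (v₂ - v₁) - -c)]
  calc C * dist (graphPoint s v₀) (graphPoint (s + δ + δ) v₂)
      ≤ C * (2 * δ + σ * (2 * r)) := by
        gcongr
        refine (dist_graphPoint_le _ _ _ _).trans ?_
        rw [show s - (s + δ + δ) = -(2 * δ) by ring, abs_neg, abs_of_pos (by positivity)]
        gcongr
    _ = σ * (C * (2 * σ + 2 * r)) := by rw [← Real.sq_sqrt hδ.le]; ring
    _ < σ * (1 - r) := mul_lt_mul_of_pos_left hCr hσ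
    _ ≤ dist v₀ v₁ := hlow
    _ ≤ dist (graphPoint s v₀) (graphPoint (s + δ) v₁) := dist_le_dist_graphPoint _ _ _ _

end GraphGeometry

lemma IsQuasisymmetry.exists_dist_le_mul {X Y : Type*} [MetricSpace X] [MetricSpace Y]
    {f : X ≃ₜ Y} (hf : IsQuasisymmetry f) :
    ∃ K : ℝ, ∀ x y z : X, dist x y ≤ dist x z → dist (f x) (f y) ≤ K * dist (f x) (f z) := by
  obtain ⟨η, hη, hf⟩ := hf
  refine ⟨η 1, fun x y z hxyz => ?_⟩
  rcases eq_or_ne x z with rfl | hxz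
  · obtain rfl : x = y := dist_le_zero.1 (by simpa using hxyz)
    simp
  have hratio : dist x y / dist x z ≤ 1 := div_le_one_of_le₀ hxyz dist_nonneg
  have hη1 : η (dist x y / dist x z) ≤ η 1 :=
    hη.monotoneOn (div_nonneg dist_nonneg dist_nonneg) (mem_Ici.2 zero_le_one) hratio
  have hfxz : 0 < dist (f x) (f z) := dist_pos.2 (f.injective.ne hxz)
  rw [← div_le_iff₀ hfxz]
  exact (hf x y z hxz).trans hη1

lemma exists_abs_sub_le_of_injOn_Icc {F : ℝ → ℝ} {a b : ℝ} (hab : a ≤ b)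
    (hF : ContinuousOn F (Icc a b)) (hinj : InjOn F (Icc a b)) {s u t : ℝ}
    (hs : s ∈ uIcc (F a) (F b)) (ht : t ∈ uIcc (F a) (F b)) (hsu : s ≤ u) (hut : u ≤ t) :
    ∃ x ∈ Icc a b, ∃ y ∈ Icc a b, ∃ z ∈ Icc a b,
      F x = s ∧ F y = u ∧ F z = t ∧ |x - y| ≤ |x - z| := by
  have hsurj : uIcc (F a) (F b) ⊆ F '' Icc a b := by
    rw [← uIcc_of_le hab]
    exact intermediate_value_uIcc (by rwa [uIcc_of_le hab])
  obtain ⟨x, hx, rfl⟩ := hsurj hs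
  obtain ⟨y, hy, rfl⟩ := hsurj (ordConnected_uIcc.out hs ht ⟨hsu, hut⟩)
  obtain ⟨z, hz, rfl⟩ := hsurj ht
  refine ⟨x, hx, y, hy, z, hz, rfl, rfl, rfl, ?_⟩
  rcases hF.strictMonoOn_of_injOn_Icc' hab hinj with hmono | hanti
  · have hxy := (hmono.le_iff_le hx hy).1 hsu
    have hyz := (hmono.le_iff_le hy hz).1 hut
    rw [abs_of_nonpos (by linarith), abs_of_nonpos (by linarith)]
    linarith
  · have hyx := (hanti.le_iff_ge hx hy).1 hsu
    have hzy := (hanti.le_iff_ge hy hz).1 hut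
    rw [abs_of_nonneg (by linarith), abs_of_nonneg (by linarith)]
    linarith

lemma exists_dist_graphPoint_le_mul_of_isQuasisymmetry {n : ℕ}
    (f₀ : ℝ → EuclideanSpace ℝ (Fin n)) {A : Set (EuclideanSpace ℝ (Fin (1 + n)))}
    (hA : A ⊆ (fun t => graphPoint t (f₀ t)) '' Ici 0) {f : Icc (0 : ℝ) 1 ≃ₜ A}
    (hf : IsQuasisymmetry f) :
    ∃ α β K : ℝ, 0 ≤ α ∧ α < β ∧ ∀ s u t, α ≤ s → s ≤ u → u ≤ t → t ≤ β →
      dist (graphPoint s (f₀ s)) (graphPoint u (f₀ u))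
        ≤ K * dist (graphPoint s (f₀ s)) (graphPoint t (f₀ t)) := by
  obtain ⟨K, hK⟩ := hf.exists_dist_le_mul
  set time : EuclideanSpace ℝ (Fin (1 + n)) → ℝ := fun p => p (Fin.castAdd n 0)
  have hgraph : ∀ p ∈ A, 0 ≤ time p ∧ graphPoint (time p) (f₀ (time p)) = p := by
    rintro p hp
    obtain ⟨t, ht, rfl⟩ := hA hp
    simpa [time, graphPoint_apply_castAdd_zero] using ht
  set F : ℝ → ℝ := fun r => time (f (projIcc 0 1 zero_le_one r))
  have hF : ∀ r, (f (projIcc 0 1 zero_le_one r) : EuclideanSpace ℝ (Fin (1 + n)))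
      = graphPoint (F r) (f₀ (F r)) := fun r => (hgraph _ (f _).2).2.symm
  have hFcont : Continuous F := by fun_prop
  have hFinj : InjOn F (Icc 0 1) := by
    intro r₁ hr₁ r₂ hr₂ h
    have : f (projIcc 0 1 zero_le_one r₁) = f (projIcc 0 1 zero_le_one r₂) :=
      Subtype.ext (by rw [hF, hF, h])
    simpa [projIcc_of_mem _ hr₁, projIcc_of_mem _ hr₂] using f.injective this
  refine ⟨min (F 0) (F 1), max (F 0) (F 1), K, le_min (hgraph _ (f _).2).1 (hgraph _ (f _).2).1,
    min_lt_max.2 (hFinj.ne (by simp) (by simp) zero_ne_one), fun s u t hs hsu hut ht => ?_⟩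
  obtain ⟨x, hx, y, hy, z, hz, rfl, rfl, rfl, hxyz⟩ :=
    exists_abs_sub_le_of_injOn_Icc zero_le_one hFcont.continuousOn hFinj
      ⟨hs, by linarith⟩ ⟨by linarith, ht⟩ hsu hut
  have := hK (projIcc 0 1 zero_le_one x) (projIcc 0 1 zero_le_one y) (projIcc 0 1 zero_le_one z)
    (by simpa [Subtype.dist_eq, projIcc_of_mem _ hx, projIcc_of_mem _ hy, projIcc_of_mem _ hz,
      Real.dist_eq] using hxyz)
  simpa only [Subtype.dist_eq, hF] using this

lemma not_isQuasisymmetry_of_subset_graph {n : ℕ} (f₀ : ℝ → EuclideanSpace ℝ (Fin n))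
    (hf₀ : ∀ (C : ℕ) (a b : ℚ), 0 ≤ a → a < b → ∃ s u t : ℝ, a ≤ s ∧ s ≤ u ∧ u ≤ t ∧ t ≤ b ∧
      C * dist (graphPoint s (f₀ s)) (graphPoint t (f₀ t))
        < dist (graphPoint s (f₀ s)) (graphPoint u (f₀ u)))
    {A : Set (EuclideanSpace ℝ (Fin (1 + n)))} (hA : A ⊆ (fun t => graphPoint t (f₀ t)) '' Ici 0)
    (f : Icc (0 : ℝ) 1 ≃ₜ A) : ¬ IsQuasisymmetry f := by
  intro hf
  obtain ⟨α, β, K, hα, hαβ, hK⟩ := exists_dist_graphPoint_le_mul_of_isQuasisymmetry f₀ hA hf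
  obtain ⟨a, hαa, haβ⟩ := exists_rat_btwn hαβ
  obtain ⟨b, hab, hbβ⟩ := exists_rat_btwn haβ
  obtain ⟨s, u, t, has, hsu, hut, htb, hlt⟩ :=
    hf₀ ⌈K⌉₊ a b (by exact_mod_cast hα.trans hαa.le) (by exact_mod_cast hab)
  have hbound := hK s u t (by linarith) hsu hut (by linarith)
  have hceil := mul_le_mul_of_nonneg_right (Nat.le_ceil K)
    (dist_nonneg (x := graphPoint s (f₀ s)) (y := graphPoint t (f₀ t)))
  linarith

namespace ProbabilityTheory

variable {Ω ι κ β : Type*} {mΩ : MeasurableSpace Ω} {mβ : MeasurableSpace β} {μ : Measure Ω}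

lemma iIndepFun.iIndepSet_iInter_preimage [Fintype κ] {X : ι × κ → Ω → β}
    (hX : iIndepFun X μ) (hXm : ∀ p, Measurable (X p)) {S : ι → κ → Set β}
    (hS : ∀ i j, MeasurableSet (S i j)) :
    iIndepSet (fun i => ⋂ j, X (i, j) ⁻¹' S i j) μ := by
  rw [iIndepSet_iff_meas_biInter fun i => MeasurableSet.iInter fun j => hXm _ (hS i j)]
  intro I
  have hblock : ∀ i, μ (⋂ j, X (i, j) ⁻¹' S i j) = ∏ j, μ (X (i, j) ⁻¹' S i j) := fun i =>
    (hX.precomp (Prod.mk_right_injective i)).meas_iInter fun j => ⟨S i j, hS i j, rfl⟩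
  have hflat := hX.meas_biInter (S := I ×ˢ Finset.univ) (s := fun p => X p ⁻¹' S p.1 p.2)
    fun p _ => ⟨S p.1 p.2, hS _ _, rfl⟩
  rw [Finset.prod_product] at hflat
  simp_rw [hblock, ← hflat]
  congr 1
  ext ω
  simp only [mem_iInter, mem_preimage, Finset.mem_product, Finset.mem_univ, and_true]
  exact ⟨fun h p hp => h p.1 hp p.2, fun h i hi j => h (i, j) hi⟩

lemma iIndepSet.measure_iInter_compl [Fintype ι] {A : ι → Set Ω} (h : iIndepSet A μ) :
    μ (⋂ i, (A i)ᶜ) = ∏ i, μ (A i)ᶜ :=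
  ((iIndepSet_iff_iIndep A μ).1 h).meas_iInter fun _ =>
    (MeasurableSpace.measurableSet_generateFrom (mem_singleton _)).compl

end ProbabilityTheory

instance {ι : Type*} [Fintype ι] : (stdGaussian (EuclideanSpace ℝ ι)).IsOpenPosMeasure := by
  have : (gaussianReal 0 1).IsOpenPosMeasure :=
    (gaussianReal_absolutelyContinuous' 0 one_ne_zero).isOpenPosMeasure
  rw [← map_pi_eq_stdGaussian]
  exact (PiLp.continuous_toLp 2 _).isOpenPosMeasure_map (WithLp.toLp_surjective 2)

def scaledIncrement {Ω : Type*} {n : ℕ} (B : ℝ → Ω → EuclideanSpace ℝ (Fin n)) (s δ : ℝ)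
    (ω : Ω) : EuclideanSpace ℝ (Fin n) :=
  (√δ)⁻¹ • (B (s + δ) ω - B s ω)

namespace IsBrownianMotion

variable {Ω : Type*} [MeasureSpace Ω] {n : ℕ} {B : ℝ → Ω → EuclideanSpace ℝ (Fin n)}

lemma measurable_increment_apply (hB : IsBrownianMotion n B) (s t : ℝ) (i : Fin n) :
    Measurable fun ω => B t ω i - B s ω i := by
  have := hB.measurable t
  have := hB.measurable s
  fun_prop

lemma measurable_scaledIncrement (hB : IsBrownianMotion n B) (s δ : ℝ) :
    Measurable (scaledIncrement B s δ) :=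
  ((hB.measurable _).sub (hB.measurable _)).const_smul (√δ)⁻¹

lemma map_scaledIncrement (hB : IsBrownianMotion n B) {s δ : ℝ} (hs : 0 ≤ s) (hδ : 0 < δ) :
    (ℙ : Measure Ω).map (scaledIncrement B s δ) = stdGaussian (EuclideanSpace ℝ (Fin n)) := by
  set Z : Fin n → Ω → ℝ := fun i ω => (√δ)⁻¹ * (B (s + δ) ω i - B s ω i)
  have hZm : ∀ i, Measurable (Z i) := fun i =>
    (hB.measurable_increment_apply s (s + δ) i).const_mul _
  have hZindep : iIndepFun Z ℙ :=
    (hB.coord_indep s (s + δ) hs (by linarith)).comp (fun _ x => (√δ)⁻¹ * x)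
      fun _ => measurable_const_mul _
  have hZlaw : ∀ i, (ℙ : Measure Ω).map (Z i) = gaussianReal 0 1 := by
    intro i
    rw [show Z i = (fun x => (√δ)⁻¹ * x) ∘ fun ω => B (s + δ) ω i - B s ω i from rfl,
      ← Measure.map_map (measurable_const_mul _) (hB.measurable_increment_apply s (s + δ) i),
      hB.coord_gaussian s (s + δ) hs (by linarith) i, gaussianReal_map_const_mul]
    congr 1
    · simp
    · ext
      simp [inv_pow, Real.sq_sqrt hδ.le, hδ.le, hδ.ne']
  have hZ : scaledIncrement B s δ = WithLp.toLp 2 ∘ fun ω i => Z i ω := by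
    ext ω i
    simp [scaledIncrement, Z]
  rw [hZ, ← Measure.map_map (by fun_prop) (measurable_pi_lambda _ hZm),
    hZindep.map_fun_eq_pi_map fun i => (hZm i).aemeasurable]
  simp_rw [hZlaw]
  exact map_pi_eq_stdGaussian

lemma iIndepFun_scaledIncrement (hB : IsBrownianMotion n B) {a δ : ℝ} (ha : 0 ≤ a) (hδ : 0 < δ)
    (m : ℕ) : iIndepFun (fun j : Fin m => scaledIncrement B (a + j * δ) δ) ℙ := by
  have h := (hB.indep_incr m (fun j => a + j * δ) (fun j => add_nonneg ha (by positivity))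
    fun i j hij => by dsimp only; gcongr; exact_mod_cast hij).comp (fun _ v => (√δ)⁻¹ • v)
    fun _ => measurable_const_smul _
  convert h using 2 with j
  ext ω
  simp only [scaledIncrement, Function.comp_apply, Fin.val_succ, Fin.val_castSucc, Nat.cast_add,
    Nat.cast_one]
  ring_nf

lemma measure_iInter_compl_iInter_scaledIncrement_mem (hB : IsBrownianMotion n B) {a δ : ℝ}
    (ha : 0 ≤ a) (hδ : 0 < δ) (N m : ℕ) {S : Fin m → Set (EuclideanSpace ℝ (Fin n))}
    (hS : ∀ l, MeasurableSet (S l)) :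
    ℙ (⋂ k : Fin N, (⋂ l : Fin m, scaledIncrement B (a + (m * k + l) * δ) δ ⁻¹' S l)ᶜ)
      = (1 - ∏ l, stdGaussian (EuclideanSpace ℝ (Fin n)) (S l)) ^ N := by
  have := hB.isProbability
  have hX : iIndepFun (fun p : Fin N × Fin m =>
      scaledIncrement B (a + (m * p.1 + p.2) * δ) δ) ℙ := by
    convert (hB.iIndepFun_scaledIncrement ha hδ (N * m)).precomp finProdFinEquiv.injective
      using 3 with p
    simp only [finProdFinEquiv_apply_val, Nat.cast_add, Nat.cast_mul]
    ring
  have hblock : ∀ k : Fin N, ℙ (⋂ l : Fin m, scaledIncrement B (a + (m * k + l) * δ) δ ⁻¹' S l)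
      = ∏ l, stdGaussian (EuclideanSpace ℝ (Fin n)) (S l) := fun k => by
    rw [(hX.precomp (Prod.mk_right_injective k)).meas_iInter fun l => ⟨S l, hS l, rfl⟩]
    refine Finset.prod_congr rfl fun l _ => ?_
    rw [← hB.map_scaledIncrement (s := a + (m * k + l) * δ) (by positivity) hδ,
      Measure.map_apply (hB.measurable_scaledIncrement _ _) (hS l)]
  rw [(hX.iIndepSet_iInter_preimage (S := fun _ l => S l)
    (fun _ => hB.measurable_scaledIncrement _ _) fun _ l => hS l).measure_iInter_compl]
  calc ∏ k : Fin N, ℙ (⋂ l : Fin m, scaledIncrement B (a + (m * k + l) * δ) δ ⁻¹' S l)ᶜ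
      = ∏ _k : Fin N, (1 - ∏ l, stdGaussian (EuclideanSpace ℝ (Fin n)) (S l)) :=
        Finset.prod_congr rfl fun k _ => by
          rw [prob_compl_eq_one_sub (MeasurableSet.iInter fun l =>
            hB.measurable_scaledIncrement _ _ (hS l)), hblock k]
    _ = _ := by simp

lemma ae_exists_scaledIncrement_mem (hB : IsBrownianMotion n B) {a b : ℝ} (ha : 0 ≤ a)
    (hab : a < b) {m : ℕ} {S : Fin m → Set (EuclideanSpace ℝ (Fin n))}
    (hS : ∀ l, MeasurableSet (S l)) (hpos : ∀ l, 0 < stdGaussian (EuclideanSpace ℝ (Fin n)) (S l))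
    {δ₀ : ℝ} (hδ₀ : 0 < δ₀) :
    ∀ᵐ ω, ∃ s δ : ℝ, a ≤ s ∧ 0 < δ ∧ δ ≤ δ₀ ∧ s + m * δ ≤ b ∧
      ∀ l : Fin m, scaledIncrement B (s + l * δ) δ ω ∈ S l := by
  have hp : 1 - ∏ l, stdGaussian (EuclideanSpace ℝ (Fin n)) (S l) < 1 :=
    ENNReal.sub_lt_self ENNReal.one_ne_top one_ne_zero
      (Finset.prod_ne_zero_iff.2 fun l _ => (hpos l).ne')
  -- `(m + 1) * (N + 1)` instead of `m * N` keeps `δ N` positive also when `m = 0` or `N = 0`.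
  set δ : ℕ → ℝ := fun N => (b - a) / ((m + 1) * (N + 1))
  have hδ : ∀ N, 0 < δ N := fun N => div_pos (sub_pos.2 hab) (by positivity)
  have hδ_mul : ∀ N : ℕ, (m + 1) * (N + 1) * δ N = b - a := fun N => by
    simp only [δ]
    field_simp
  obtain ⟨N₀, hN₀⟩ := exists_nat_gt ((b - a) / δ₀)
  have hδ_le : ∀ N ≥ N₀, δ N ≤ δ₀ := fun N hN => by
    rw [div_lt_iff₀ hδ₀] at hN₀
    have hN : (N₀ : ℝ) ≤ N := by exact_mod_cast hN
    have hmN : (N₀ : ℝ) ≤ (m + 1) * (N + 1) := by nlinarith [(Nat.cast_nonneg m : (0 : ℝ) ≤ m)]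
    rw [div_le_iff₀ (by positivity)]
    nlinarith
  rw [ae_iff]
  refine le_antisymm (ge_of_tendsto (ENNReal.tendsto_pow_atTop_nhds_zero_of_lt_one hp)
    (Filter.eventually_atTop.2 ⟨N₀, fun N hN => ?_⟩)) zero_le
  rw [← hB.measure_iInter_compl_iInter_scaledIncrement_mem ha (hδ N) N m hS]
  refine measure_mono fun ω hω => mem_iInter.2 fun k hk => hω
    ⟨a + m * k * δ N, δ N, le_add_of_nonneg_right (mul_nonneg (by positivity) (hδ N).le), hδ N,
      hδ_le N hN, ?_, fun l => by
        simpa only [mem_preimage, add_mul, add_assoc] using mem_iInter.1 hk l⟩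
  have hk : (k : ℝ) ≤ N := by exact_mod_cast k.isLt.le
  calc a + m * k * δ N + m * δ N = a + m * (k + 1) * δ N := by ring
    _ ≤ a + (m + 1) * (N + 1) * δ N := by gcongr; linarith
    _ = b := by rw [hδ_mul]; ring

lemma ae_exists_mul_dist_graphPoint_lt (hB : IsBrownianMotion n B) (hn : 1 ≤ n) {C : ℝ}
    (hC : 0 ≤ C) {a b : ℝ} (ha : 0 ≤ a) (hab : a < b) :
    ∀ᵐ ω, ∃ s u t : ℝ, a ≤ s ∧ s ≤ u ∧ u ≤ t ∧ t ≤ b ∧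
      C * dist (graphPoint s (B s ω)) (graphPoint t (B t ω))
        < dist (graphPoint s (B s ω)) (graphPoint u (B u ω)) := by
  set c : EuclideanSpace ℝ (Fin n) := EuclideanSpace.single ⟨0, hn⟩ 1
  have hc : ‖c‖ = 1 := by simp [c]
  set r : ℝ := 1 / (4 * (C + 1))
  have hr : 0 < r := by positivity
  set S : Fin 2 → Set (EuclideanSpace ℝ (Fin n)) := ![closedBall c r, closedBall (-c) r]
  have hS : ∀ l, MeasurableSet (S l) :=
    Fin.forall_fin_two.2 ⟨measurableSet_closedBall, measurableSet_closedBall⟩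
  have hpos : ∀ l, 0 < stdGaussian (EuclideanSpace ℝ (Fin n)) (S l) :=
    Fin.forall_fin_two.2 ⟨measure_closedBall_pos _ _ hr, measure_closedBall_pos _ _ hr⟩
  filter_upwards [hB.ae_exists_scaledIncrement_mem ha hab hS hpos (pow_pos hr 2)]
    with ω ⟨s, δ, has, hδ, hδr, hsb, hmem⟩
  have hsqrt_le : √δ ≤ r := (Real.sqrt_le_sqrt hδr).trans_eq (Real.sqrt_sq hr.le)
  have hCr : C * (2 * √δ + 2 * r) < 1 - r :=
    calc C * (2 * √δ + 2 * r) ≤ C * (4 * r) := by gcongr; linarith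
      _ < 1 - r := by
        simp only [r]
        field_simp
        linarith
  push_cast at hsb
  refine ⟨s, s + δ, s + δ + δ, has, by linarith, by linarith, by linarith, ?_⟩
  have h₁ := hmem 0
  have h₂ := hmem 1
  simp only [scaledIncrement, S, Fin.val_zero, Fin.val_one, Nat.cast_zero, Nat.cast_one, zero_mul,
    one_mul, add_zero, Matrix.cons_val_zero, Matrix.cons_val_one] at h₁ h₂
  exact mul_dist_graphPoint_lt hC hδ hCr hc s h₁ h₂

end IsBrownianMotion

/-- For `n ≥ 1` and `B` an `n`-dimensional Brownian motion started
at `0`, with `G = {(t, B t) : t ∈ [0,∞)} ⊆ ℝ^{1+n}` the graph of `B`, almost surely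
every nondegenerate arc contained in `G` is not a quasiarc: for every `A ⊆ G` which
is the image of `[0,1]` under a homeomorphism and has more than one point, there is
no quasisymmetric homeomorphism from `[0,1]` onto `A`. -/
theorem brownian_graph_arcs_not_quasiarcs
    {Ω : Type*} [MeasureSpace Ω] (n : ℕ) (hn : 1 ≤ n)
    (B : ℝ → Ω → EuclideanSpace ℝ (Fin n)) (hB : IsBrownianMotion n B) :
    ∀ᵐ ω ∂ℙ, ∀ A : Set (EuclideanSpace ℝ (Fin (1 + n))),
      A ⊆ (fun t => graphPoint t (B t ω)) '' Set.Ici 0 →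
      Nonempty ((Set.Icc (0 : ℝ) 1) ≃ₜ A) →
      A.Nontrivial →
      ¬ ∃ f : (Set.Icc (0 : ℝ) 1) ≃ₜ A, IsQuasisymmetry f := by
  have hratio : ∀ᵐ ω ∂ℙ, ∀ (C : ℕ) (a b : ℚ), 0 ≤ a → a < b → ∃ s u t : ℝ,
      a ≤ s ∧ s ≤ u ∧ u ≤ t ∧ t ≤ b ∧
        C * dist (graphPoint s (B s ω)) (graphPoint t (B t ω))
          < dist (graphPoint s (B s ω)) (graphPoint u (B u ω)) := by
    simp only [ae_all_iff, Filter.eventually_imp_distrib_left]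
    intro C a b ha hab
    exact hB.ae_exists_mul_dist_graphPoint_lt hn C.cast_nonneg (by exact_mod_cast ha)
      (by exact_mod_cast hab)
  filter_upwards [hratio] with ω hω A hA _ _ ⟨f, hf⟩
  exact not_isQuasisymmetry_of_subset_graph (fun t => B t ω) hω hA f hf

end
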